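/- arXiv:2410.21251 — 8 statements merged into one kernel-verified Lean document; each statement's English description precedes it below -/
import Mathlib

section
/- Let K ≥ 1 be a natural number, let v : Fin K → ℝ satisfy 0 < v b for every b, and let M > 0 be a real number. Then (∑_b √(v b))² / M is the least element of the set { s : ℝ | ∃ m : Fin K → ℝ, (∀ b, 0 < m b) ∧ ∑_b m b = M ∧ s = ∑_b v b / m b }; that is, every positive allocation m with ∑_b m b = M satisfies ∑_b v b / m b ≥ (∑_b √(v b))² / M, and this value is attained (e.g. by m b = M·√(v b)/(∑_c √(v c))). -/
open Finset

/-- **Optimal sampling budget allocation** (Lemma 1 of the paper):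
`(∑ b, √(v b))² / M` is the least value of `∑ b, v b / m b` over positive
allocations `m` with `∑ b, m b = M`. -/
theorem stmt0 (K : ℕ) (hK : 1 ≤ K) (v : Fin K → ℝ) (hv : ∀ b, 0 < v b)
    (M : ℝ) (hM : 0 < M) :
    IsLeast { s : ℝ | ∃ m : Fin K → ℝ, (∀ b, 0 < m b) ∧ (∑ b, m b) = M ∧
        s = ∑ b, v b / m b }
      ((∑ b, Real.sqrt (v b)) ^ 2 / M) := by
  have hne : (Finset.univ : Finset (Fin K)).Nonempty := by
    simpa [Finset.univ_nonempty_iff] using Fin.pos_iff_nonempty.mp hK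
  set S := ∑ b, Real.sqrt (v b) with hS
  have hSpos : 0 < S :=
    Finset.sum_pos (fun b _ => Real.sqrt_pos.mpr (hv b)) hne
  constructor
  · refine ⟨fun b => M * Real.sqrt (v b) / S, fun b => div_pos (mul_pos hM (Real.sqrt_pos.mpr (hv b))) hSpos, ?_, ?_⟩
    · rw [← Finset.sum_div, ← Finset.mul_sum, ← hS, mul_div_assoc,
        div_self hSpos.ne', mul_one]
    · have : ∀ b, v b / (M * Real.sqrt (v b) / S) = Real.sqrt (v b) * S / M := by
        intro b
        rw [div_div_eq_mul_div, mul_comm M (Real.sqrt (v b)), ← div_div,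
          mul_div_right_comm, Real.div_sqrt]
      simp_rw [this]
      rw [← Finset.sum_div, ← Finset.sum_mul, ← hS, sq]
  · rintro s ⟨m, hm, hsum, rfl⟩
    have key := Finset.sq_sum_div_le_sum_sq_div Finset.univ
      (fun b => Real.sqrt (v b)) (g := m) (fun b _ => hm b)
    rw [hsum] at key
    refine key.trans_eq ?_
    exact Finset.sum_congr rfl fun b _ => by
      rw [Real.sq_sqrt (hv b).le]
end

section
/- Let 𝓗 be a complex inner product space, let ψ ∈ 𝓗 be a unit vector, let K be a natural number, and let H_b : 𝓗 →ₗ[ℂ] 𝓗 (b : Fin K) be symmetric linear operators. Then Var_ψ(∑_b H_b) ≤ (∑_b √(Var_ψ(H_b)))². -/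
open Finset

/-- The quantum variance of an observable `O` in the state `ψ`:
`Var_ψ(O) = ‖O ψ‖² − (re⟪ψ, O ψ⟫)²`. -/
noncomputable def qVar {𝓗 : Type*} [NormedAddCommGroup 𝓗] [InnerProductSpace ℂ 𝓗]
    (ψ : 𝓗) (O : 𝓗 →ₗ[ℂ] 𝓗) : ℝ :=
  ‖O ψ‖ ^ 2 - ((inner ℂ ψ (O ψ) : ℂ).re) ^ 2

/-!
For a unit vector `ψ`, the variance of `O` is the squared length of the deviation
`O ψ - ⟨O⟩_ψ ψ`, where `⟨O⟩_ψ = re⟪ψ, O ψ⟫`. The deviation is additive in `O`, so the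
variance bound for `∑ b, H b` is the triangle inequality for the deviations of the `H b`.
-/

section

variable {𝓗 : Type*} [NormedAddCommGroup 𝓗] [InnerProductSpace ℂ 𝓗]

noncomputable def qDev (ψ : 𝓗) (O : 𝓗 →ₗ[ℂ] 𝓗) : 𝓗 :=
  O ψ - (((inner ℂ ψ (O ψ)).re : ℝ) : ℂ) • ψ

lemma qVar_eq_norm_qDev_sq {ψ : 𝓗} (hψ : ‖ψ‖ = 1) (O : 𝓗 →ₗ[ℂ] 𝓗) :
    qVar ψ O = ‖qDev ψ O‖ ^ 2 := by
  set c : ℝ := (inner ℂ ψ (O ψ)).re with hc_def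
  have hc : (inner ℂ (O ψ) ψ).re = c := by
    rw [hc_def, ← inner_conj_symm ψ (O ψ), Complex.conj_re]
  have hcross : (inner ℂ (O ψ) ((c : ℂ) • ψ)).re = c * c := by
    rw [inner_smul_right (O ψ) ψ (c : ℂ), Complex.re_ofReal_mul, hc]
  rw [qDev, norm_sub_sq (𝕜 := ℂ), RCLike.re_to_complex, hcross, norm_smul, hψ, qVar]
  simp only [Complex.norm_real, Real.norm_eq_abs, mul_one, sq_abs]
  ring

lemma sqrt_qVar_eq_norm_qDev {ψ : 𝓗} (hψ : ‖ψ‖ = 1) (O : 𝓗 →ₗ[ℂ] 𝓗) :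
    Real.sqrt (qVar ψ O) = ‖qDev ψ O‖ := by
  rw [qVar_eq_norm_qDev_sq hψ, Real.sqrt_sq (norm_nonneg _)]

lemma qDev_sum {ι : Type*} (ψ : 𝓗) (s : Finset ι) (O : ι → 𝓗 →ₗ[ℂ] 𝓗) :
    qDev ψ (∑ b ∈ s, O b) = ∑ b ∈ s, qDev ψ (O b) := by
  simp only [qDev, LinearMap.sum_apply, inner_sum, Complex.re_sum,
    Complex.ofReal_sum, Finset.sum_smul, Finset.sum_sub_distrib]

end

theorem stmt1_general {𝓗 : Type*} [NormedAddCommGroup 𝓗] [InnerProductSpace ℂ 𝓗]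
    (ψ : 𝓗) (hψ : ‖ψ‖ = 1) (K : ℕ) (H : Fin K → (𝓗 →ₗ[ℂ] 𝓗)) :
    qVar ψ (∑ b, H b) ≤ (∑ b, Real.sqrt (qVar ψ (H b))) ^ 2 := by
  rw [qVar_eq_norm_qDev_sq hψ, qDev_sum]
  simp only [sqrt_qVar_eq_norm_qDev hψ]
  gcongr
  exact norm_sum_le _ _

/-- Partitioning an observable can only increase the shot-noise cost:
`Var_ψ(∑ b, H b) ≤ (∑ b, √(Var_ψ(H b)))²`. -/
theorem stmt1 {𝓗 : Type*} [NormedAddCommGroup 𝓗] [InnerProductSpace ℂ 𝓗]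
    (ψ : 𝓗) (hψ : ‖ψ‖ = 1) (K : ℕ) (H : Fin K → (𝓗 →ₗ[ℂ] 𝓗))
    (hH : ∀ b, (H b).IsSymmetric) :
    qVar ψ (∑ b, H b) ≤ (∑ b, Real.sqrt (qVar ψ (H b))) ^ 2 :=
  stmt1_general ψ hψ K H
end

section
/- Let 𝓗 be a complex inner product space, let ψ ∈ 𝓗 be a unit vector, let K be a natural number, let H_b : 𝓗 →ₗ[ℂ] 𝓗 (b : Fin K) be symmetric linear operators, and let m : Fin K → ℝ satisfy 0 < m b for every b. Setting M := ∑_b m b, one has Var_ψ(∑_b H_b) / M ≤ ∑_b Var_ψ(H_b) / m b. In particular, partitioning an observable never decreases the (optimally allocated) shot-noise bound. -/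
open Finset

/-!
For a unit vector `ψ`, `Var_ψ(O) = ‖O ψ − re⟪ψ, O ψ⟫ ψ‖²`, and the deviation vector
`O ψ − re⟪ψ, O ψ⟫ ψ` is additive in `O`. By the triangle inequality `√Var_ψ` is therefore
subadditive, `Var_ψ(∑ H_b) ≤ (∑ √Var_ψ(H_b))²`, and the Cauchy–Schwarz inequality in the form
`(∑ a_b)² / ∑ m_b ≤ ∑ a_b² / m_b` concludes.
-/

section Deviation

variable {𝓗 : Type*} [NormedAddCommGroup 𝓗] [InnerProductSpace ℂ 𝓗]

noncomputable def qDeviation (ψ : 𝓗) (O : 𝓗 →ₗ[ℂ] 𝓗) : 𝓗 :=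
  O ψ - ((inner ℂ ψ (O ψ)).re : ℂ) • ψ

lemma qDeviation_sum {ι : Type*} (ψ : 𝓗) (s : Finset ι) (O : ι → 𝓗 →ₗ[ℂ] 𝓗) :
    qDeviation ψ (∑ i ∈ s, O i) = ∑ i ∈ s, qDeviation ψ (O i) := by
  simp only [qDeviation, LinearMap.coe_sum, Finset.sum_apply, inner_sum, Complex.re_sum,
    Complex.ofReal_sum, Finset.sum_smul, Finset.sum_sub_distrib]

lemma qVar_eq_norm_qDeviation_sq {ψ : 𝓗} (hψ : ‖ψ‖ = 1) (O : 𝓗 →ₗ[ℂ] 𝓗) :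
    qVar ψ O = ‖qDeviation ψ O‖ ^ 2 := by
  set a : ℝ := (inner ℂ ψ (O ψ) : ℂ).re
  have hcross : RCLike.re (inner ℂ (O ψ) ((a : ℂ) • ψ)) = a ^ 2 := by
    rw [inner_smul_right, sq, RCLike.re_to_complex, Complex.re_ofReal_mul]
    exact congrArg (a * ·) (inner_re_symm (𝕜 := ℂ) (O ψ) ψ)
  rw [qVar, qDeviation, @norm_sub_sq ℂ, hcross, norm_smul, hψ, Complex.norm_real,
    Real.norm_eq_abs, mul_one, sq_abs]
  ring

lemma qVar_sum_le {ι : Type*} {ψ : 𝓗} (hψ : ‖ψ‖ = 1) (s : Finset ι)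
    (O : ι → 𝓗 →ₗ[ℂ] 𝓗) :
    qVar ψ (∑ i ∈ s, O i) ≤ (∑ i ∈ s, ‖qDeviation ψ (O i)‖) ^ 2 := by
  rw [qVar_eq_norm_qDeviation_sq hψ, qDeviation_sum]
  gcongr
  exact norm_sum_le s _

end Deviation

theorem stmt2_general {𝓗 : Type*} [NormedAddCommGroup 𝓗] [InnerProductSpace ℂ 𝓗]
    (ψ : 𝓗) (hψ : ‖ψ‖ = 1) (K : ℕ) (H : Fin K → (𝓗 →ₗ[ℂ] 𝓗))
    (m : Fin K → ℝ) (hm : ∀ b, 0 < m b) :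
    qVar ψ (∑ b, H b) / (∑ b, m b) ≤ ∑ b, qVar ψ (H b) / m b := by
  have hM : 0 ≤ ∑ b, m b := Finset.sum_nonneg fun b _ => (hm b).le
  calc qVar ψ (∑ b, H b) / (∑ b, m b)
      ≤ (∑ b, ‖qDeviation ψ (H b)‖) ^ 2 / (∑ b, m b) := by
        gcongr
        exact qVar_sum_le hψ univ H
    _ ≤ ∑ b, ‖qDeviation ψ (H b)‖ ^ 2 / m b :=
        Finset.sq_sum_div_le_sum_sq_div _ _ fun b _ => hm b
    _ = ∑ b, qVar ψ (H b) / m b := by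
        simp_rw [qVar_eq_norm_qDeviation_sq hψ]

/-- Partitioning an observable never decreases the shot-noise bound:
for any positive measurement allocation `m` with total budget `M = ∑ b, m b`,
`Var_ψ(∑ b, H b) / M ≤ ∑ b, Var_ψ(H b) / m b`. -/
theorem stmt2 {𝓗 : Type*} [NormedAddCommGroup 𝓗] [InnerProductSpace ℂ 𝓗]
    (ψ : 𝓗) (hψ : ‖ψ‖ = 1) (K : ℕ) (H : Fin K → (𝓗 →ₗ[ℂ] 𝓗))
    (hH : ∀ b, (H b).IsSymmetric) (m : Fin K → ℝ) (hm : ∀ b, 0 < m b) :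
    qVar ψ (∑ b, H b) / (∑ b, m b) ≤ ∑ b, qVar ψ (H b) / m b :=
  stmt2_general ψ hψ K H m hm
end

section
/- Let K be a natural number and let a : Fin K → ℝ be nonnegative and antitone, i.e. 0 ≤ a k for all k and a j ≤ a i whenever i ≤ j in Fin K. Then (∑_k √(a k))² ≥ ∑_k (2·(k : ℕ) + 1) · a k. -/
open Finset

lemma stmt4_aux (b : ℕ → ℝ) (hb : ∀ k, 0 ≤ b k) (hmono : ∀ i j, i ≤ j → b j ≤ b i) :
    ∀ n, ∑ k ∈ Finset.range n, (2 * (k : ℝ) + 1) * b k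
      ≤ (∑ k ∈ Finset.range n, Real.sqrt (b k)) ^ 2 := by
  intro n
  induction n with
  | zero => simp
  | succ n ih =>
    rw [Finset.sum_range_succ, Finset.sum_range_succ]
    have hS : (n : ℝ) * Real.sqrt (b n) ≤ ∑ k ∈ Finset.range n, Real.sqrt (b k) := by
      calc (n : ℝ) * Real.sqrt (b n) = ∑ _k ∈ Finset.range n, Real.sqrt (b n) := by
            rw [Finset.sum_const, Finset.card_range, nsmul_eq_mul]
        _ ≤ ∑ k ∈ Finset.range n, Real.sqrt (b k) := by
            apply Finset.sum_le_sum
            intro k hk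
            exact Real.sqrt_le_sqrt (hmono k n (Finset.mem_range.mp hk).le)
    have hsq : Real.sqrt (b n) ^ 2 = b n := Real.sq_sqrt (hb n)
    have h0 : 0 ≤ Real.sqrt (b n) := Real.sqrt_nonneg _
    nlinarith [ih, Finset.sum_nonneg fun k (_ : k ∈ Finset.range n) => Real.sqrt_nonneg (b k)]

/-- Lower bound of Lemma 2 (Variance (In-)Equalities): for nonnegative,
non-increasing `a`, `(∑ k, √(a k))² ≥ ∑ k, (2k+1)·(a k)` (0-indexed). -/
theorem stmt4 (K : ℕ) (a : Fin K → ℝ) (ha : ∀ k, 0 ≤ a k) (hmono : Antitone a) :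
    (∑ k, Real.sqrt (a k)) ^ 2 ≥ ∑ k : Fin K, (2 * ((k : ℕ) : ℝ) + 1) * a k := by
  set b : ℕ → ℝ := fun k => if h : k < K then a ⟨k, h⟩ else 0 with hbdef
  have hb : ∀ k, 0 ≤ b k := by
    intro k; simp only [hbdef]; split <;> simp [ha]
  have hbm : ∀ i j, i ≤ j → b j ≤ b i := by
    intro i j hij
    simp only [hbdef]
    by_cases hj : j < K
    · have hi : i < K := lt_of_le_of_lt hij hj
      simp [hi, hj]
      exact hmono (show (⟨i, hi⟩ : Fin K) ≤ ⟨j, hj⟩ from hij)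
    · simp [hj]; split <;> [exact ha _; exact le_refl 0]
  have h1 : ∑ k : Fin K, (2 * ((k : ℕ) : ℝ) + 1) * a k
      = ∑ k ∈ Finset.range K, (2 * (k : ℝ) + 1) * b k := by
    rw [Finset.sum_range fun k => (2 * (k : ℝ) + 1) * b k]
    apply Finset.sum_congr rfl
    intro k _
    simp [hbdef, k.isLt]
  have h2 : ∑ k, Real.sqrt (a k) = ∑ k ∈ Finset.range K, Real.sqrt (b k) := by
    rw [Finset.sum_range fun k => Real.sqrt (b k)]
    apply Finset.sum_congr rfl
    intro k _
    simp [hbdef, k.isLt]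
  rw [h1, h2]
  exact stmt4_aux b hb hbm K
end

section
/- Let 𝓗 be a complex inner product space, let H₁, H₂ : 𝓗 →ₗ[ℂ] 𝓗 be symmetric linear operators, let E : ℝ, and let ψ ∈ 𝓗 be a unit vector with (H₁ + H₂) ψ = E • ψ. Then Var_ψ(H₁) = Var_ψ(H₂). -/
/-! For a unit vector, `Var_ψ(O) = ‖O ψ - ⟨O⟩ ψ‖²` with `⟨O⟩ = re⟪ψ, O ψ⟫`. On an eigenvector,
`H₂ ψ = E ψ - H₁ ψ` and `⟨H₂⟩ = E - ⟨H₁⟩`, so the centred vectors of `H₁` and `H₂` are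
negatives of each other and have the same norm. -/

open Finset

section QuantumVariance

variable {𝓗 : Type*} [NormedAddCommGroup 𝓗] [InnerProductSpace ℂ 𝓗] {ψ : 𝓗}

lemma qVar_eq_norm_sub_sq (hψ : ‖ψ‖ = 1) (O : 𝓗 →ₗ[ℂ] 𝓗) :
    qVar ψ O = ‖O ψ - ((inner ℂ ψ (O ψ)).re : ℂ) • ψ‖ ^ 2 := by
  have hsymm : (inner ℂ (O ψ) ψ).re = (inner ℂ ψ (O ψ)).re := inner_re_symm (𝕜 := ℂ) _ _
  rw [@norm_sub_sq ℂ, inner_smul_right, RCLike.re_to_complex, Complex.re_ofReal_mul, hsymm,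
    norm_smul, hψ, Complex.norm_real, Real.norm_eq_abs, mul_one, sq_abs, qVar]
  ring

lemma qVar_eq_of_apply_eq_smul_sub (hψ : ‖ψ‖ = 1) {A B : 𝓗 →ₗ[ℂ] 𝓗} {c : ℝ}
    (hB : B ψ = (c : ℂ) • ψ - A ψ) : qVar ψ B = qVar ψ A := by
  have hψψ : inner ℂ ψ ψ = (1 : ℂ) := by
    rw [inner_self_eq_norm_sq_to_K, hψ]; norm_num
  have hmean : (inner ℂ ψ (B ψ)).re = c - (inner ℂ ψ (A ψ)).re := by
    rw [hB, inner_sub_right, inner_smul_right, hψψ, mul_one, Complex.sub_re, Complex.ofReal_re]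
  have hcentred : B ψ - ((inner ℂ ψ (B ψ)).re : ℂ) • ψ
      = -(A ψ - ((inner ℂ ψ (A ψ)).re : ℂ) • ψ) := by
    rw [hmean, hB, Complex.ofReal_sub, sub_smul]
    abel
  rw [qVar_eq_norm_sub_sq hψ, qVar_eq_norm_sub_sq hψ, hcentred, norm_neg]

end QuantumVariance

theorem stmt5_general {𝓗 : Type*} [NormedAddCommGroup 𝓗] [InnerProductSpace ℂ 𝓗]
    (H₁ H₂ : 𝓗 →ₗ[ℂ] 𝓗)
    (E : ℝ) (ψ : 𝓗) (hψ : ‖ψ‖ = 1) (heig : (H₁ + H₂) ψ = (E : ℂ) • ψ) :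
    qVar ψ H₁ = qVar ψ H₂ := by
  refine (qVar_eq_of_apply_eq_smul_sub hψ (c := E) ?_).symm
  rw [← heig, LinearMap.add_apply, add_sub_cancel_left]

/-- Corollary 1, Eq. (26): for an eigenstate of a two-partitioned observable
`H₁ + H₂`, the variances of the two parts coincide. -/
theorem stmt5 {𝓗 : Type*} [NormedAddCommGroup 𝓗] [InnerProductSpace ℂ 𝓗]
    (H₁ H₂ : 𝓗 →ₗ[ℂ] 𝓗) (hH₁ : H₁.IsSymmetric) (hH₂ : H₂.IsSymmetric)
    (E : ℝ) (ψ : 𝓗) (hψ : ‖ψ‖ = 1) (heig : (H₁ + H₂) ψ = (E : ℂ) • ψ) :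
    qVar ψ H₁ = qVar ψ H₂ :=
  stmt5_general H₁ H₂ E ψ hψ heig
end

section
/- Let d ≥ 1, let μ be the Haar probability measure on the unitary group U(d) = Matrix.unitaryGroup (Fin d) ℂ, let e ∈ ℂ^d be a unit vector (ℓ² norm), and write ξ_U := U *ᵥ e. Then for every d×d complex matrix O, ∫_{U(d)} ⟨ξ_U, O *ᵥ ξ_U⟩ dμ(U) = (Tr O) / d, where ⟨v, w⟩ := ∑_i conj(v i)·(w i). -/
/-!
Let `φ O` be the Haar average of `⟨U e, O (U e)⟩`. It is linear in `O`, and left invariance of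
Haar measure makes it invariant under unitary conjugation `O ↦ V⋆ O V`. Conjugating by a diagonal
sign matrix flips the sign of an off-diagonal matrix unit, so `φ` kills it; conjugating by a
transposition matrix exchanges two diagonal matrix units, so `φ` takes the same value on all of
them. Hence `φ` is a multiple of the trace, and `φ 1 = ‖e‖² = 1` fixes the multiple to `1 / d`.
-/

open MeasureTheory Matrix

/-- The standard inner product `⟨v, w⟩ = ∑ i, conj (v i) * w i` on `ℂ^d`. -/
noncomputable def cip {d : ℕ} (v w : Fin d → ℂ) : ℂ :=
  ∑ i, (starRingEnd ℂ) (v i) * w i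

namespace Matrix

variable {R n : Type*} [Fintype n]

lemma star_dotProduct_mulVec_mul_mul [CommSemiring R] [StarRing R] (V O : Matrix n n R)
    (v : n → R) : star v ⬝ᵥ ((star V * O * V) *ᵥ v) = star (V *ᵥ v) ⬝ᵥ (O *ᵥ (V *ᵥ v)) := by
  rw [← mulVec_mulVec, ← mulVec_mulVec, dotProduct_mulVec, star_mulVec, star_eq_conjTranspose]

variable [DecidableEq n]

lemma diagonal_mem_unitaryGroup [CommRing R] [StarRing R] {d : n → R}
    (hd : ∀ k, star (d k) * d k = 1) : diagonal d ∈ unitaryGroup n R := by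
  rw [mem_unitaryGroup_iff', star_eq_conjTranspose, diagonal_conjTranspose, diagonal_mul_diagonal]
  exact (congrArg diagonal (funext hd)).trans diagonal_one

lemma swap_mem_unitaryGroup [CommRing R] [StarRing R] (i j : n) :
    swap R i j ∈ unitaryGroup n R := by
  rw [mem_unitaryGroup_iff, star_eq_conjTranspose, conjTranspose_swap, swap_mul_self]

lemma diagonal_mul_single_mul_diagonal [CommSemiring R] (d : n → R) (i j : n) (c : R) :
    diagonal d * single i j c * diagonal d = (d i * d j) • single i j c := by
  ext k l
  simp only [mul_diagonal, diagonal_mul, smul_apply, single_apply, smul_eq_mul]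
  split_ifs with h
  · obtain ⟨rfl, rfl⟩ := h
    ring
  · simp

lemma swap_mul_single_mul_swap [Semiring R] (i j : n) (c : R) :
    swap R i j * single i i c * swap R i j = single j j c := by
  simp [swap, PEquiv.toMatrix_toPEquiv_mul, PEquiv.mul_toMatrix_toPEquiv]

instance {𝕜 : Type*} [RCLike 𝕜] : CompactSpace (unitaryGroup n 𝕜) := by
  refine isCompact_iff_compactSpace.mp <|
    (isCompact_univ_pi fun _ => isCompact_univ_pi fun _ => isCompact_closedBall (0 : 𝕜) 1)
      |>.of_isClosed_subset (isClosed_unitary (R := Matrix n n 𝕜)) fun U hU i _ j _ => ?_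
  simpa using entry_norm_bound_of_unitary hU i j

end Matrix

section UnitaryConjInvariant

variable {𝕜 n : Type*} [RCLike 𝕜] [Fintype n] [DecidableEq n] {φ : Matrix n n 𝕜 →ₗ[𝕜] 𝕜}
  (hφ : ∀ V ∈ unitaryGroup n 𝕜, ∀ O, φ (star V * O * V) = φ O)
include hφ

lemma LinearMap.map_single_eq_zero_of_unitary_conj_invariant {i j : n} (hij : i ≠ j) :
    φ (Matrix.single i j 1) = 0 := by
  set D : Matrix n n 𝕜 := diagonal fun k => if k = i then -1 else 1
  have hD_star : star D = D := by
    rw [star_eq_conjTranspose, diagonal_conjTranspose]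
    congr 1 with k
    by_cases hk : k = i <;> simp [hk]
  have hD_unitary : D ∈ unitaryGroup n 𝕜 := diagonal_mem_unitaryGroup fun k => by
    by_cases hk : k = i <;> simp [hk]
  have h := hφ D hD_unitary (Matrix.single i j 1)
  rw [hD_star, diagonal_mul_single_mul_diagonal] at h
  exact CharZero.neg_eq_self_iff.mp (by simpa [hij.symm] using h)

lemma LinearMap.map_single_self_eq_of_unitary_conj_invariant (i j : n) :
    φ (Matrix.single i i 1) = φ (Matrix.single j j 1) := by
  have h := hφ _ (swap_mem_unitaryGroup i j) (Matrix.single i i 1)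
  rwa [star_eq_conjTranspose, conjTranspose_swap, swap_mul_single_mul_swap, eq_comm] at h

lemma LinearMap.map_mul_card_eq_trace_mul_of_unitary_conj_invariant (O : Matrix n n 𝕜) :
    φ O * Fintype.card n = O.trace * φ 1 := by
  have hsingle (i j : n) (c : 𝕜) : φ (Matrix.single i j c) = c * φ (Matrix.single i j 1) := by
    rw [← smul_eq_mul, ← map_smul, smul_single, smul_eq_mul, mul_one]
  have hdiag (A : Matrix n n 𝕜) : φ A = ∑ i, A i i * φ (Matrix.single i i 1) := by
    conv_lhs => rw [matrix_eq_sum_single A]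
    simp only [map_sum]
    refine Finset.sum_congr rfl fun i _ => ?_
    rw [Finset.sum_eq_single i (fun j _ hji => ?_) (by simp), hsingle]
    rw [hsingle, map_single_eq_zero_of_unitary_conj_invariant hφ hji.symm, mul_zero]
  calc φ O * Fintype.card n = ∑ i, ∑ _j : n, O i i * φ (Matrix.single i i 1) := by
        rw [hdiag O, Finset.sum_mul]
        simp only [Finset.sum_const, Finset.card_univ, nsmul_eq_mul, mul_comm]
    _ = ∑ i, ∑ j, O i i * φ (Matrix.single j j 1) :=
        Finset.sum_congr rfl fun i _ => Finset.sum_congr rfl fun j _ => by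
          rw [map_single_self_eq_of_unitary_conj_invariant hφ i j]
    _ = O.trace * φ 1 := by
        simp [hdiag 1, Matrix.trace, Finset.sum_mul_sum]

end UnitaryConjInvariant

section HaarAverage

variable {𝕜 n : Type*} [RCLike 𝕜] [Fintype n] [DecidableEq n]
  [MeasurableSpace (unitaryGroup n 𝕜)] [BorelSpace (unitaryGroup n 𝕜)]
  (μ : Measure (unitaryGroup n 𝕜)) [IsFiniteMeasure μ] (e : n → 𝕜)

lemma integrable_star_dotProduct_mulVec (O : Matrix n n 𝕜) :
    Integrable (fun U : unitaryGroup n 𝕜 =>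
      star ((U : Matrix n n 𝕜) *ᵥ e) ⬝ᵥ (O *ᵥ ((U : Matrix n n 𝕜) *ᵥ e))) μ :=
  Continuous.integrable_of_hasCompactSupport (by fun_prop) (HasCompactSupport.of_compactSpace _)

noncomputable def haarAverage : Matrix n n 𝕜 →ₗ[𝕜] 𝕜 where
  toFun O := ∫ U : unitaryGroup n 𝕜,
    star ((U : Matrix n n 𝕜) *ᵥ e) ⬝ᵥ (O *ᵥ ((U : Matrix n n 𝕜) *ᵥ e)) ∂μ
  map_add' A B := by
    simp only [add_mulVec, dotProduct_add]
    exact integral_add (integrable_star_dotProduct_mulVec μ e A)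
      (integrable_star_dotProduct_mulVec μ e B)
  map_smul' c A := by
    simp only [smul_mulVec, dotProduct_smul, smul_eq_mul, RingHom.id_apply]
    exact integral_const_mul c _

lemma haarAverage_conj_unitary [μ.IsMulLeftInvariant] (V : Matrix n n 𝕜)
    (hV : V ∈ unitaryGroup n 𝕜) (O : Matrix n n 𝕜) :
    haarAverage μ e (star V * O * V) = haarAverage μ e O := by
  simp only [haarAverage, LinearMap.coe_mk, AddHom.coe_mk]
  conv_rhs => rw [← integral_mul_left_eq_self (μ := μ) _ ⟨V, hV⟩]
  congr 1 with U
  rw [star_dotProduct_mulVec_mul_mul, mulVec_mulVec]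
  rfl

lemma haarAverage_one [IsProbabilityMeasure μ] : haarAverage μ e 1 = star e ⬝ᵥ e := by
  have h (U : unitaryGroup n 𝕜) :
      star ((U : Matrix n n 𝕜) *ᵥ e) ⬝ᵥ (1 *ᵥ ((U : Matrix n n 𝕜) *ᵥ e)) = star e ⬝ᵥ e := by
    rw [← star_dotProduct_mulVec_mul_mul, Matrix.mul_one, mem_unitaryGroup_iff'.mp U.2,
      one_mulVec]
  simp only [haarAverage, LinearMap.coe_mk, AddHom.coe_mk, h, integral_const, probReal_univ,
    one_smul]

end HaarAverage

/-- First-moment identity for Haar-random states (Appendix C of the paper):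
`E[⟨ξ, O ξ⟩] = Tr O / d` where `ξ = U *ᵥ e` for Haar-random `U ∈ U(d)`. -/
theorem stmt10 (d : ℕ) (hd : 1 ≤ d)
    [MeasurableSpace (Matrix.unitaryGroup (Fin d) ℂ)]
    [BorelSpace (Matrix.unitaryGroup (Fin d) ℂ)]
    (μ : Measure (Matrix.unitaryGroup (Fin d) ℂ))
    [μ.IsHaarMeasure] [IsProbabilityMeasure μ]
    (e : Fin d → ℂ) (he : ∑ i, ‖e i‖ ^ 2 = 1)
    (O : Matrix (Fin d) (Fin d) ℂ) :
    ∫ U : Matrix.unitaryGroup (Fin d) ℂ,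
        cip ((U : Matrix (Fin d) (Fin d) ℂ) *ᵥ e)
          (O *ᵥ ((U : Matrix (Fin d) (Fin d) ℂ) *ᵥ e)) ∂μ
      = O.trace / (d : ℂ) := by
  change haarAverage μ e O = _
  have he_unit : star e ⬝ᵥ e = 1 := by
    simp only [dotProduct, Pi.star_apply, Complex.star_def, Complex.conj_mul']
    exact_mod_cast he
  have key := LinearMap.map_mul_card_eq_trace_mul_of_unitary_conj_invariant
    (haarAverage_conj_unitary μ e) O
  rw [haarAverage_one, he_unit, Fintype.card_fin, mul_one] at key
  rw [eq_div_iff (by exact_mod_cast (by omega : d ≠ 0))]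
  exact key
end

section
/- Let d ≥ 1, let μ be the Haar probability measure on the unitary group U(d) = Matrix.unitaryGroup (Fin d) ℂ, let e ∈ ℂ^d be a unit vector (ℓ² norm), and write ξ_U := U *ᵥ e. Then for every d×d complex matrix O and every vector ψ ∈ ℂ^d, ∫_{U(d)} ⟨ψ, O *ᵥ ξ_U⟩ · ⟨ξ_U, O *ᵥ ψ⟩ dμ(U) = ⟨ψ, O *ᵥ (O *ᵥ ψ)⟩ / d, where ⟨v, w⟩ := ∑_i conj(v i)·(w i). -/
/-!
Left invariance of Haar measure makes the second moment `M = E[ξ ξᴴ]` of `ξ = U e` invariant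
under conjugation by every unitary, so `M` commutes with the reflections `1 - 2 Eᵢᵢ` and the
transposition matrices, hence with every `Eᵢⱼ = Eᵢᵢ P₍ᵢⱼ₎`, and is therefore scalar.
Its trace is `E‖ξ‖² = ‖e‖² = 1`, so `M = 1/d`, and the integrand is the bilinear form
`ψᴴ O (ξ ξᴴ) O ψ`, whose mean is `ψᴴ O M O ψ = ψᴴ O² ψ / d`.
-/

open MeasureTheory Matrix

namespace Matrix

variable {n : Type*} [Fintype n]

theorem dotProduct_mul_dotProduct {R : Type*} [CommSemiring R] (a x y b : n → R) :
    (a ⬝ᵥ x) * (y ⬝ᵥ b) = a ⬝ᵥ vecMulVec x y *ᵥ b := by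
  rw [vecMulVec_mulVec, op_smul_eq_smul, dotProduct_smul, smul_eq_mul, mul_comm]

theorem vecMulVec_mulVec_star {R : Type*} [CommSemiring R] [StarRing R]
    (V : Matrix n n R) (x : n → R) :
    vecMulVec (V *ᵥ x) (star (V *ᵥ x)) = V * vecMulVec x (star x) * Vᴴ := by
  rw [star_mulVec, mul_vecMulVec, vecMulVec_mul]

theorem integral_dotProduct_mulVec {α 𝕜 m : Type*} [MeasurableSpace α] {μ : Measure α}
    [RCLike 𝕜] [Fintype m] {X : α → Matrix m n 𝕜}
    (hX : ∀ i j, Integrable (fun x => X x i j) μ) (a : m → 𝕜) (b : n → 𝕜) :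
    ∫ x, a ⬝ᵥ X x *ᵥ b ∂μ = a ⬝ᵥ (of fun i j => ∫ x, X x i j ∂μ) *ᵥ b := by
  simp only [dotProduct, mulVec, Finset.mul_sum, of_apply]
  rw [integral_finsetSum _ fun i _ =>
    integrable_finsetSum _ fun j _ => ((hX i j).mul_const _).const_mul _]
  refine Finset.sum_congr rfl fun i _ => ?_
  rw [integral_finsetSum _ fun j _ => ((hX i j).mul_const _).const_mul _]
  refine Finset.sum_congr rfl fun j _ => ?_
  rw [integral_const_mul, integral_mul_const]

variable [DecidableEq n]

theorem permMatrix_mem_unitaryGroup {R : Type*} [CommRing R] [StarRing R] (σ : Equiv.Perm n) :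
    σ.permMatrix R ∈ unitaryGroup n R := by
  rw [mem_unitaryGroup_iff', star_eq_conjTranspose, conjTranspose_permMatrix, ← permMatrix_mul,
    mul_inv_cancel, permMatrix_one]

theorem one_sub_single_two_mem_unitaryGroup (i : n) :
    1 - single i i (2 : ℂ) ∈ unitaryGroup n ℂ := by
  rw [mem_unitaryGroup_iff', star_eq_conjTranspose]
  simp [sub_mul, mul_sub, single_mul_single_same, show (2 : ℂ) * 2 = 2 + 2 by norm_num, single_add]

theorem single_eq_single_mul_permMatrix_swap (i j : n) :
    single i j (1 : ℂ) = single i i 1 * (Equiv.swap i j).permMatrix ℂ := by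
  refine Matrix.ext fun a b => ?_
  rcases eq_or_ne a i with rfl | ha
  · simp [single_mul_apply_same, single_apply, PEquiv.toMatrix_apply]
  · rw [single_mul_apply_of_ne (h := ha), single_apply_of_row_ne ha.symm]

theorem mem_range_scalar_of_forall_unitary_commute {M : Matrix n n ℂ}
    (hM : ∀ V ∈ unitaryGroup n ℂ, Commute V M) : M ∈ Set.range (scalar n) := by
  refine mem_range_scalar_of_commute_single fun i j _ => ?_
  have hdiag : Commute (single i i (1 : ℂ)) M := by
    have h := (((hM _ (one_sub_single_two_mem_unitaryGroup i)).neg_left.add_left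
      (Commute.one_left M)).smul_left (2⁻¹ : ℂ))
    simpa [smul_single] using h
  dsimp only
  rw [single_eq_single_mul_permMatrix_swap]
  exact hdiag.mul_left (hM _ (permMatrix_mem_unitaryGroup _))

theorem UnitaryGroup.star_mulVec_dotProduct_mulVec (U : unitaryGroup n ℂ) (x : n → ℂ) :
    star ((U : Matrix n n ℂ) *ᵥ x) ⬝ᵥ ((U : Matrix n n ℂ) *ᵥ x) = star x ⬝ᵥ x := by
  rw [star_mulVec, ← dotProduct_mulVec, mulVec_mulVec, ← star_eq_conjTranspose,
    UnitaryGroup.star_mul_self, one_mulVec]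

instance : CompactSpace (unitaryGroup n ℂ) :=
  isCompact_iff_compactSpace.mp <| (isCompact_closedBall (0 : ℂ) 1).matrix.of_isClosed_subset
    isClosed_unitary fun _ hU i j => by simpa using entry_norm_bound_of_unitary hU i j

end Matrix

namespace Matrix.UnitaryGroup

variable {n : Type*} [Fintype n] [DecidableEq n] [MeasurableSpace (unitaryGroup n ℂ)]
  (μ : Measure (unitaryGroup n ℂ)) (e : n → ℂ)

-- Integrated entrywise, as `Matrix` carries no global norm.
noncomputable def orbitSecondMoment : Matrix n n ℂ :=
  of fun i j => ∫ U, vecMulVec ((U : Matrix n n ℂ) *ᵥ e) (star ((U : Matrix n n ℂ) *ᵥ e)) i j ∂μ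

theorem integrable_vecMulVec_orbit_apply [OpensMeasurableSpace (unitaryGroup n ℂ)]
    [IsFiniteMeasure μ] (i j : n) :
    Integrable (fun U : unitaryGroup n ℂ =>
      vecMulVec ((U : Matrix n n ℂ) *ᵥ e) (star ((U : Matrix n n ℂ) *ᵥ e)) i j) μ := by
  refine Continuous.integrable_of_hasCompactSupport ?_ (HasCompactSupport.of_compactSpace _)
  have hξ : Continuous fun U : unitaryGroup n ℂ => (U : Matrix n n ℂ) *ᵥ e :=
    continuous_subtype_val.matrix_mulVec continuous_const
  exact ((hξ.matrix_vecMulVec hξ.star).matrix_elem i j)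

theorem integral_dotProduct_vecMulVec_orbit_mulVec [OpensMeasurableSpace (unitaryGroup n ℂ)]
    [IsFiniteMeasure μ] (a b : n → ℂ) :
    ∫ U : unitaryGroup n ℂ,
        a ⬝ᵥ vecMulVec ((U : Matrix n n ℂ) *ᵥ e) (star ((U : Matrix n n ℂ) *ᵥ e)) *ᵥ b ∂μ =
      a ⬝ᵥ orbitSecondMoment μ e *ᵥ b :=
  integral_dotProduct_mulVec (integrable_vecMulVec_orbit_apply μ e) a b

theorem commute_orbitSecondMoment [BorelSpace (unitaryGroup n ℂ)] [IsFiniteMeasure μ]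
    [μ.IsMulLeftInvariant] (V : unitaryGroup n ℂ) :
    Commute (V : Matrix n n ℂ) (orbitSecondMoment μ e) := by
  have hconj : (V : Matrix n n ℂ) * orbitSecondMoment μ e * star (V : Matrix n n ℂ) =
      orbitSecondMoment μ e := by
    refine Matrix.ext fun i j => ?_
    rw [mul_mul_apply, ← integral_dotProduct_vecMulVec_orbit_mulVec]
    simp_rw [← mul_mul_apply, star_eq_conjTranspose, ← vecMulVec_mulVec_star, mulVec_mulVec]
    exact integral_mul_left_eq_self (fun U : unitaryGroup n ℂ =>
      vecMulVec ((U : Matrix n n ℂ) *ᵥ e) (star ((U : Matrix n n ℂ) *ᵥ e)) i j) V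
  calc (V : Matrix n n ℂ) * orbitSecondMoment μ e
      = (V : Matrix n n ℂ) * orbitSecondMoment μ e * (star (V : Matrix n n ℂ) * V) := by
        rw [UnitaryGroup.star_mul_self, Matrix.mul_one]
    _ = orbitSecondMoment μ e * V := by rw [← Matrix.mul_assoc, hconj]

theorem trace_orbitSecondMoment [OpensMeasurableSpace (unitaryGroup n ℂ)]
    [IsProbabilityMeasure μ] : trace (orbitSecondMoment μ e) = star e ⬝ᵥ e := by
  have htrace : ∀ U : unitaryGroup n ℂ,
      trace (vecMulVec ((U : Matrix n n ℂ) *ᵥ e) (star ((U : Matrix n n ℂ) *ᵥ e))) =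
        star e ⬝ᵥ e := fun U => by
    rw [trace_vecMulVec, dotProduct_comm, star_mulVec_dotProduct_mulVec]
  calc trace (orbitSecondMoment μ e)
      = ∫ U : unitaryGroup n ℂ,
          trace (vecMulVec ((U : Matrix n n ℂ) *ᵥ e) (star ((U : Matrix n n ℂ) *ᵥ e))) ∂μ :=
        (integral_finsetSum _ fun i _ => integrable_vecMulVec_orbit_apply μ e i i).symm
    _ = star e ⬝ᵥ e := by simp [htrace]

theorem orbitSecondMoment_eq_smul_one [BorelSpace (unitaryGroup n ℂ)] [μ.IsMulLeftInvariant]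
    [IsProbabilityMeasure μ] :
    orbitSecondMoment μ e = (star e ⬝ᵥ e / Fintype.card n) • (1 : Matrix n n ℂ) := by
  obtain ⟨c, hc⟩ := mem_range_scalar_of_forall_unitary_commute fun V hV =>
    commute_orbitSecondMoment μ e ⟨V, hV⟩
  have htrace := trace_orbitSecondMoment μ e
  rw [← hc] at htrace ⊢
  cases isEmpty_or_nonempty n
  · exact Subsingleton.elim _ _
  · simp only [scalar_apply, trace_diagonal, Finset.sum_const, Finset.card_univ,
      nsmul_eq_mul] at htrace
    rw [← htrace, mul_div_cancel_left₀ _ (Nat.cast_ne_zero.mpr Fintype.card_ne_zero),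
      scalar_apply, smul_one_eq_diagonal]

end Matrix.UnitaryGroup

theorem stmt11_general (d : ℕ)
    [MeasurableSpace (Matrix.unitaryGroup (Fin d) ℂ)]
    [BorelSpace (Matrix.unitaryGroup (Fin d) ℂ)]
    (μ : Measure (Matrix.unitaryGroup (Fin d) ℂ))
    [μ.IsHaarMeasure] [IsProbabilityMeasure μ]
    (e : Fin d → ℂ) (he : ∑ i, ‖e i‖ ^ 2 = 1)
    (O : Matrix (Fin d) (Fin d) ℂ) (ψ : Fin d → ℂ) :
    ∫ U : Matrix.unitaryGroup (Fin d) ℂ,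
        cip ψ (O *ᵥ ((U : Matrix (Fin d) (Fin d) ℂ) *ᵥ e)) *
          cip ((U : Matrix (Fin d) (Fin d) ℂ) *ᵥ e) (O *ᵥ ψ) ∂μ
      = cip ψ (O *ᵥ (O *ᵥ ψ)) / (d : ℂ) := by
  have hunit : star e ⬝ᵥ e = 1 := by
    simp only [dotProduct, Pi.star_apply, RCLike.star_def, Complex.conj_mul']
    exact_mod_cast he
  have hintegrand : ∀ U : unitaryGroup (Fin d) ℂ,
      cip ψ (O *ᵥ ((U : Matrix (Fin d) (Fin d) ℂ) *ᵥ e)) *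
          cip ((U : Matrix (Fin d) (Fin d) ℂ) *ᵥ e) (O *ᵥ ψ) =
        (star ψ ᵥ* O) ⬝ᵥ vecMulVec ((U : Matrix (Fin d) (Fin d) ℂ) *ᵥ e)
          (star ((U : Matrix (Fin d) (Fin d) ℂ) *ᵥ e)) *ᵥ (O *ᵥ ψ) := fun U => by
    rw [← dotProduct_mul_dotProduct, ← dotProduct_mulVec]
    rfl
  simp_rw [hintegrand]
  rw [UnitaryGroup.integral_dotProduct_vecMulVec_orbit_mulVec,
    UnitaryGroup.orbitSecondMoment_eq_smul_one, hunit, Fintype.card_fin, smul_mulVec,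
    one_mulVec, dotProduct_smul, smul_eq_mul, ← dotProduct_mulVec, one_div, inv_mul_eq_div]
  rfl

/-- Cross-moment identity for Haar-random states (Appendix C of the paper):
`E[⟨ψ, O ξ⟩⟨ξ, O ψ⟩] = ⟨ψ, O² ψ⟩ / d` where `ξ = U *ᵥ e` for Haar-random `U`. -/
theorem stmt11 (d : ℕ) (hd : 1 ≤ d)
    [MeasurableSpace (Matrix.unitaryGroup (Fin d) ℂ)]
    [BorelSpace (Matrix.unitaryGroup (Fin d) ℂ)]
    (μ : Measure (Matrix.unitaryGroup (Fin d) ℂ))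
    [μ.IsHaarMeasure] [IsProbabilityMeasure μ]
    (e : Fin d → ℂ) (he : ∑ i, ‖e i‖ ^ 2 = 1)
    (O : Matrix (Fin d) (Fin d) ℂ) (ψ : Fin d → ℂ) :
    ∫ U : Matrix.unitaryGroup (Fin d) ℂ,
        cip ψ (O *ᵥ ((U : Matrix (Fin d) (Fin d) ℂ) *ᵥ e)) *
          cip ((U : Matrix (Fin d) (Fin d) ℂ) *ᵥ e) (O *ᵥ ψ) ∂μ
      = cip ψ (O *ᵥ (O *ᵥ ψ)) / (d : ℂ) :=
  stmt11_general d μ e he O ψ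
end

section
/- Let d ≥ 1, let μ be the Haar probability measure on the unitary group U(d) = Matrix.unitaryGroup (Fin d) ℂ, let e ∈ ℂ^d be a unit vector (ℓ² norm), and write ξ_U := U *ᵥ e. Then for every Hermitian d×d complex matrix O (Oᴴ = O), ∫_{U(d)} (re⟨ξ_U, O *ᵥ ξ_U⟩)² dμ(U) = ((re Tr O)² + re Tr(O·O)) / (d·(d+1)), where ⟨v, w⟩ := ∑_i conj(v i)·(w i). -/
/-!
Write `ξ = U e`. Left invariance of `μ` makes the law of `ξ` invariant under every unitary `W`,
so `E[(re ⟨ξ, O ξ⟩)²]` is unchanged under unitary conjugation of `O`, and the moments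
`N(k, l) = E[|ξ_k|² |ξ_l|²]` are unchanged under permutations of coordinates:
`N(k, k) = A` and `N(k, l) = B` for `k ≠ l`. Diagonalising a Hermitian `O` then gives
`E[(re ⟨ξ, O ξ⟩)²] = B (Tr O)² + (A - B) Tr O²`. The traceless matrices `E_pq + E_qp` and
`i (E_pq - E_qp)` have quadratic forms `2 Re z` and `-2 Im z` with `z = conj ξ_p ξ_q`, and the
sum of their squares is `4 |ξ_p|² |ξ_q|²`; this gives `4 (A - B) = 4 B`, i.e. `A = 2 B`.
Finally `|ξ| = 1` gives `d A + d (d - 1) B = 1`.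
-/

open MeasureTheory Matrix

instance Matrix.UnitaryGroup.instCompactSpace {n 𝕜 : Type*} [Fintype n] [DecidableEq n]
    [RCLike 𝕜] : CompactSpace (unitaryGroup n 𝕜) := by
  have hK : IsCompact (Set.univ.pi fun _ : n => Set.univ.pi fun _ : n =>
      Metric.closedBall (0 : 𝕜) 1 : Set (Matrix n n 𝕜)) :=
    isCompact_univ_pi fun _ => isCompact_univ_pi fun _ => isCompact_closedBall 0 1
  refine isCompact_iff_compactSpace.mp <|
    hK.of_isClosed_subset (isClosed_unitary (R := Matrix n n 𝕜)) fun _ hU i _ j _ => ?_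
  simpa using entry_norm_bound_of_unitary hU i j

theorem Equiv.Perm.permMatrix_mem_unitaryGroup {n 𝕜 : Type*} [Fintype n] [DecidableEq n]
    [RCLike 𝕜] (σ : Equiv.Perm n) : σ.permMatrix 𝕜 ∈ unitaryGroup n 𝕜 := by
  rw [mem_unitaryGroup_iff, star_eq_conjTranspose]
  simp [Equiv.Perm.permMatrix, ← PEquiv.toMatrix_trans, ← Equiv.toPEquiv_trans,
    Equiv.Perm.inv_def]

variable {ι : Type*} [Fintype ι]

theorem star_mulVec_dotProduct_mulVec {R : Type*} [CommSemiring R] [StarRing R]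
    (A O : Matrix ι ι R) (v : ι → R) :
    star (A *ᵥ v) ⬝ᵥ (O *ᵥ (A *ᵥ v)) = star v ⬝ᵥ ((Aᴴ * O * A) *ᵥ v) := by
  rw [star_mulVec, ← dotProduct_mulVec, mulVec_mulVec, mulVec_mulVec, Matrix.mul_assoc]

theorem star_dotProduct_self_eq {𝕜 : Type*} [RCLike 𝕜] (v : ι → 𝕜) :
    star v ⬝ᵥ v = ((∑ k, ‖v k‖ ^ 2 : ℝ) : 𝕜) := by
  simp [dotProduct, RCLike.conj_mul]

variable [DecidableEq ι]

theorem sum_norm_sq_mulVec_of_mem_unitaryGroup {𝕜 : Type*} [RCLike 𝕜]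
    {U : Matrix ι ι 𝕜} (hU : U ∈ unitaryGroup ι 𝕜) (v : ι → 𝕜) :
    ∑ k, ‖(U *ᵥ v) k‖ ^ 2 = ∑ k, ‖v k‖ ^ 2 := by
  have h := star_mulVec_dotProduct_mulVec U 1 v
  rw [one_mulVec, Matrix.mul_one, ← star_eq_conjTranspose, mem_unitaryGroup_iff'.mp hU, one_mulVec,
    star_dotProduct_self_eq, star_dotProduct_self_eq] at h
  exact_mod_cast h

theorem star_dotProduct_single_mulVec {R : Type*} [CommSemiring R] [StarRing R]
    (v : ι → R) (p q : ι) (a : R) :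
    star v ⬝ᵥ (single p q a *ᵥ v) = star (v p) * a * v q := by
  simp only [single_mulVec_eq, dotProduct_smul, dotProduct_single, Pi.star_apply, mul_one,
    smul_eq_mul]
  ring

theorem re_sq_add_re_sq_offDiag (p q : ι) (v : ι → ℂ) :
    (star v ⬝ᵥ ((single p q 1 + single q p 1) *ᵥ v)).re ^ 2
      + (star v ⬝ᵥ ((single p q Complex.I - single q p Complex.I) *ᵥ v)).re ^ 2
      = 4 * (‖v p‖ ^ 2 * ‖v q‖ ^ 2) := by
  simp only [add_mulVec, sub_mulVec, dotProduct_add, dotProduct_sub, star_dotProduct_single_mulVec]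
  simp only [RCLike.star_def, mul_one, Complex.add_re, Complex.mul_re, Complex.conj_re,
    Complex.conj_im, neg_mul, sub_neg_eq_add, Complex.sub_re, Complex.I_re, mul_zero, Complex.I_im,
    zero_add, Complex.mul_im, add_zero, Complex.sq_norm, Complex.normSq_apply]
  ring

theorem re_star_dotProduct_diagonal_mulVec (c : ι → ℝ) (v : ι → ℂ) :
    (star v ⬝ᵥ (diagonal (fun k => (c k : ℂ)) *ᵥ v)).re = ∑ k, c k * ‖v k‖ ^ 2 := by
  simp only [dotProduct, mulVec_diagonal, Pi.star_apply, RCLike.star_def]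
  rw [Complex.re_sum]
  refine Finset.sum_congr rfl fun k _ => ?_
  rw [mul_left_comm, Complex.conj_mul']
  norm_cast

theorem trace_conjStarAlgAut (V : unitaryGroup ι ℂ) (M : Matrix ι ι ℂ) :
    trace (Unitary.conjStarAlgAut ℂ _ V M) = trace M := by
  rw [Unitary.conjStarAlgAut_apply, trace_mul_cycle, Unitary.coe_star_mul_self, Matrix.one_mul]

variable [MeasurableSpace (unitaryGroup ι ℂ)] (μ : Measure (unitaryGroup ι ℂ)) (e : ι → ℂ)

noncomputable def quadSqMoment (O : Matrix ι ι ℂ) : ℝ :=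
  ∫ U, (star ((U : Matrix ι ι ℂ) *ᵥ e) ⬝ᵥ (O *ᵥ ((U : Matrix ι ι ℂ) *ᵥ e))).re ^ 2 ∂μ

noncomputable def coordMoment (k l : ι) : ℝ :=
  ∫ U, ‖((U : Matrix ι ι ℂ) *ᵥ e) k‖ ^ 2 * ‖((U : Matrix ι ι ℂ) *ᵥ e) l‖ ^ 2 ∂μ

variable [BorelSpace (unitaryGroup ι ℂ)]

theorem integrable_comp_mulVec [IsFiniteMeasure μ] {F : (ι → ℂ) → ℝ} (hF : Continuous F) :
    Integrable (fun U : unitaryGroup ι ℂ => F ((U : Matrix ι ι ℂ) *ᵥ e)) μ :=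
  (hF.comp (continuous_subtype_val.matrix_mulVec continuous_const)).integrable_of_hasCompactSupport
    (.of_compactSpace _)

theorem integral_mulVec_mulVec_eq_self [μ.IsMulLeftInvariant] {E : Type*} [NormedAddCommGroup E]
    [NormedSpace ℝ E] (F : (ι → ℂ) → E) (W : unitaryGroup ι ℂ) :
    ∫ U, F ((W : Matrix ι ι ℂ) *ᵥ ((U : Matrix ι ι ℂ) *ᵥ e)) ∂μ
      = ∫ U, F ((U : Matrix ι ι ℂ) *ᵥ e) ∂μ := by
  simp_rw [mulVec_mulVec]
  exact integral_mul_left_eq_self (fun U : unitaryGroup ι ℂ => F ((U : Matrix ι ι ℂ) *ᵥ e)) W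

theorem quadSqMoment_conjStarAlgAut [μ.IsMulLeftInvariant] (V : unitaryGroup ι ℂ)
    (O : Matrix ι ι ℂ) :
    quadSqMoment μ e (Unitary.conjStarAlgAut ℂ _ V O) = quadSqMoment μ e O := by
  rw [quadSqMoment, quadSqMoment,
    ← integral_mulVec_mulVec_eq_self μ e (fun v => (star v ⬝ᵥ (O *ᵥ v)).re ^ 2) (star V)]
  simp_rw [star_mulVec_dotProduct_mulVec]
  simp [star_eq_conjTranspose]

theorem coordMoment_perm [μ.IsMulLeftInvariant] (σ : Equiv.Perm ι) (k l : ι) :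
    coordMoment μ e (σ k) (σ l) = coordMoment μ e k l := by
  have h := integral_mulVec_mulVec_eq_self μ e (fun v => ‖v k‖ ^ 2 * ‖v l‖ ^ 2)
    ⟨σ.permMatrix ℂ, σ.permMatrix_mem_unitaryGroup⟩
  simp only [permMatrix_mulVec, Function.comp_apply] at h
  exact h

theorem coordMoment_diag_eq [μ.IsMulLeftInvariant] (k k' : ι) :
    coordMoment μ e k k = coordMoment μ e k' k' := by
  simpa using (coordMoment_perm μ e (Equiv.swap k k') k k).symm

theorem coordMoment_eq_of_ne [μ.IsMulLeftInvariant] {k l k' l' : ι} (hkl : k ≠ l)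
    (hkl' : k' ≠ l') : coordMoment μ e k l = coordMoment μ e k' l' := by
  have hl : Equiv.swap k k' l ≠ k' := fun h =>
    hkl ((Equiv.swap k k').injective (h.trans (Equiv.swap_apply_left k k').symm)).symm
  rw [← coordMoment_perm μ e (Equiv.swap k k'), Equiv.swap_apply_left,
    ← coordMoment_perm μ e (Equiv.swap (Equiv.swap k k' l) l'), Equiv.swap_apply_left,
    Equiv.swap_apply_of_ne_of_ne hl.symm hkl']

theorem quadSqMoment_diagonal [IsFiniteMeasure μ] (c : ι → ℝ) :
    quadSqMoment μ e (diagonal fun k => (c k : ℂ))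
      = ∑ k, ∑ l, c k * c l * coordMoment μ e k l := by
  simp only [quadSqMoment, re_star_dotProduct_diagonal_mulVec, pow_two (Finset.sum _ _),
    Finset.sum_mul_sum]
  rw [integral_finsetSum _ fun k _ => integrable_finsetSum _ fun l _ =>
    integrable_comp_mulVec μ e (F := fun v => c k * ‖v k‖ ^ 2 * (c l * ‖v l‖ ^ 2)) (by fun_prop)]
  refine Finset.sum_congr rfl fun k _ => ?_
  rw [integral_finsetSum _ fun l _ =>
    integrable_comp_mulVec μ e (F := fun v => c k * ‖v k‖ ^ 2 * (c l * ‖v l‖ ^ 2)) (by fun_prop)]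
  refine Finset.sum_congr rfl fun l _ => ?_
  rw [coordMoment, ← integral_const_mul]
  congr 1 with U
  ring

theorem quadSqMoment_eq_of_coordMoment [IsFiniteMeasure μ] [μ.IsMulLeftInvariant] {α β : ℝ}
    (hN : ∀ k l, coordMoment μ e k l = α + β * if k = l then 1 else 0) {O : Matrix ι ι ℂ}
    (hO : O.IsHermitian) :
    quadSqMoment μ e O = α * O.trace.re ^ 2 + β * (O * O).trace.re := by
  obtain ⟨V, c, rfl⟩ : ∃ (V : unitaryGroup ι ℂ) (c : ι → ℝ),
      O = Unitary.conjStarAlgAut ℂ _ V (diagonal fun k => (c k : ℂ)) :=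
    ⟨hO.eigenvectorUnitary, hO.eigenvalues, hO.spectral_theorem⟩
  rw [← map_mul, diagonal_mul_diagonal, quadSqMoment_conjStarAlgAut, trace_conjStarAlgAut,
    trace_conjStarAlgAut, quadSqMoment_diagonal]
  simp only [hN, trace_diagonal, Complex.re_sum, Complex.ofReal_re, mul_add, Finset.sum_add_distrib,
    mul_ite, mul_one, mul_zero, Finset.sum_ite_eq, Finset.mem_univ, if_true, sq, Finset.sum_mul_sum]
  simp only [← Complex.ofReal_mul, Complex.ofReal_re, mul_comm α, mul_comm β, Finset.sum_mul]

theorem two_mul_coordMoment_of_ne [IsFiniteMeasure μ] [μ.IsMulLeftInvariant] {p q : ι}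
    (hpq : p ≠ q) : 2 * coordMoment μ e p q = coordMoment μ e p p := by
  set X : Matrix ι ι ℂ := single p q 1 + single q p 1
  set Y : Matrix ι ι ℂ := single p q Complex.I - single q p Complex.I
  have hX : X.IsHermitian := by simp [X, IsHermitian, conjTranspose_add, add_comm]
  have hY : Y.IsHermitian := by
    simp only [Y, IsHermitian, conjTranspose_sub, conjTranspose_single, RCLike.star_def,
      Complex.conj_I, ← single_neg]
    abel
  have hN : ∀ k l, coordMoment μ e k l = coordMoment μ e p q
      + (coordMoment μ e p p - coordMoment μ e p q) * if k = l then 1 else 0 := by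
    intro k l
    split_ifs with hkl
    · rw [hkl, coordMoment_diag_eq μ e l p]
      ring
    · rw [coordMoment_eq_of_ne μ e hkl hpq]
      ring
  have hXY : quadSqMoment μ e X + quadSqMoment μ e Y = 4 * coordMoment μ e p q := by
    rw [quadSqMoment, quadSqMoment, ← integral_add
      (integrable_comp_mulVec μ e (F := fun v => (star v ⬝ᵥ (X *ᵥ v)).re ^ 2) (by fun_prop))
      (integrable_comp_mulVec μ e (F := fun v => (star v ⬝ᵥ (Y *ᵥ v)).re ^ 2) (by fun_prop)),
      coordMoment, ← integral_const_mul]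
    simp only [X, Y, re_sq_add_re_sq_offDiag]
  rw [quadSqMoment_eq_of_coordMoment μ e hN hX, quadSqMoment_eq_of_coordMoment μ e hN hY] at hXY
  simp only [X, Y, trace_add, trace_sub, trace_neg, mul_add, add_mul, mul_sub, sub_mul,
    single_mul_single_of_ne, single_mul_single_same, trace_single_eq_same, ne_eq, hpq, hpq.symm,
    not_false_eq_true, trace_single_eq_of_ne, Complex.I_mul_I, Complex.add_re, Complex.one_re,
    Complex.zero_re, OfNat.ofNat_ne_zero, zero_pow, mul_zero, mul_one, add_zero, zero_add, sub_self,
    zero_sub, sub_zero, neg_neg, sub_neg_eq_add] at hXY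
  linarith

theorem sum_coordMoment [IsProbabilityMeasure μ] (he : ∑ k, ‖e k‖ ^ 2 = 1) :
    ∑ k, ∑ l, coordMoment μ e k l = 1 := by
  have h := quadSqMoment_diagonal μ e fun _ => 1
  simp only [Complex.ofReal_one, diagonal_one, one_mul] at h
  rw [← h, quadSqMoment]
  simp [star_dotProduct_self_eq, sum_norm_sq_mulVec_of_mem_unitaryGroup, he]

theorem coordMoment_eq [IsProbabilityMeasure μ] [μ.IsMulLeftInvariant]
    (he : ∑ k, ‖e k‖ ^ 2 = 1) (k l : ι) :
    coordMoment μ e k l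
      = (1 + if k = l then 1 else 0) / (Fintype.card ι * (Fintype.card ι + 1)) := by
  have hN : ∀ a b,
      coordMoment μ e a b = (1 + if a = b then 1 else 0) * (coordMoment μ e k k / 2) := by
    intro a b
    rw [coordMoment_diag_eq μ e k a]
    split_ifs with hab
    · rw [hab]
      ring
    · rw [← two_mul_coordMoment_of_ne μ e hab]
      ring
  generalize coordMoment μ e k k / 2 = c at hN
  have hsum := sum_coordMoment μ e he
  simp only [hN, add_mul, one_mul, Finset.sum_add_distrib, ite_mul, zero_mul, Finset.sum_ite_eq,
    Finset.mem_univ, if_true, Finset.sum_const, Finset.card_univ, nsmul_eq_mul] at hsum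
  replace hsum : (Fintype.card ι * (Fintype.card ι + 1) : ℝ) * c = 1 := by
    linear_combination hsum
  rw [hN, eq_div_iff (left_ne_zero_of_mul_eq_one hsum)]
  linear_combination (1 + if k = l then (1 : ℝ) else 0) * hsum

theorem quadSqMoment_eq [IsProbabilityMeasure μ] [μ.IsMulLeftInvariant]
    (he : ∑ k, ‖e k‖ ^ 2 = 1) {O : Matrix ι ι ℂ} (hO : O.IsHermitian) :
    quadSqMoment μ e O
      = (O.trace.re ^ 2 + (O * O).trace.re) / (Fintype.card ι * (Fintype.card ι + 1)) := by
  have hN : ∀ k l, coordMoment μ e k l = 1 / (Fintype.card ι * (Fintype.card ι + 1))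
      + 1 / (Fintype.card ι * (Fintype.card ι + 1)) * if k = l then 1 else 0 := fun k l => by
    rw [coordMoment_eq μ e he]
    ring
  rw [quadSqMoment_eq_of_coordMoment μ e hN hO]
  ring

theorem stmt12_general (d : ℕ)
    [MeasurableSpace (Matrix.unitaryGroup (Fin d) ℂ)]
    [BorelSpace (Matrix.unitaryGroup (Fin d) ℂ)]
    (μ : Measure (Matrix.unitaryGroup (Fin d) ℂ))
    [μ.IsHaarMeasure] [IsProbabilityMeasure μ]
    (e : Fin d → ℂ) (he : ∑ i, ‖e i‖ ^ 2 = 1)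
    (O : Matrix (Fin d) (Fin d) ℂ) (hO : O.IsHermitian) :
    ∫ U : Matrix.unitaryGroup (Fin d) ℂ,
        ((cip ((U : Matrix (Fin d) (Fin d) ℂ) *ᵥ e)
          (O *ᵥ ((U : Matrix (Fin d) (Fin d) ℂ) *ᵥ e))).re) ^ 2 ∂μ
      = ((O.trace.re) ^ 2 + (O * O).trace.re) / ((d : ℝ) * ((d : ℝ) + 1)) := by
  have h := quadSqMoment_eq μ e he hO
  rw [Fintype.card_fin] at h
  -- `cip v w` unfolds to `star v ⬝ᵥ w`
  exact h

/-- Second-moment identity for Haar-random states (Appendix C of the paper):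
`E[⟨ξ, O ξ⟩²] = ((Tr O)² + Tr(O²)) / (d(d+1))` for Hermitian `O`, where
`ξ = U *ᵥ e` for Haar-random `U ∈ U(d)`. -/
theorem stmt12 (d : ℕ) (hd : 1 ≤ d)
    [MeasurableSpace (Matrix.unitaryGroup (Fin d) ℂ)]
    [BorelSpace (Matrix.unitaryGroup (Fin d) ℂ)]
    (μ : Measure (Matrix.unitaryGroup (Fin d) ℂ))
    [μ.IsHaarMeasure] [IsProbabilityMeasure μ]
    (e : Fin d → ℂ) (he : ∑ i, ‖e i‖ ^ 2 = 1)
    (O : Matrix (Fin d) (Fin d) ℂ) (hO : O.IsHermitian) :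
    ∫ U : Matrix.unitaryGroup (Fin d) ℂ,
        ((cip ((U : Matrix (Fin d) (Fin d) ℂ) *ᵥ e)
          (O *ᵥ ((U : Matrix (Fin d) (Fin d) ℂ) *ᵥ e))).re) ^ 2 ∂μ
      = ((O.trace.re) ^ 2 + (O * O).trace.re) / ((d : ℝ) * ((d : ℝ) + 1)) :=
  stmt12_general d μ e he O hO
end
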